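/- arXiv:2205.11778 — 3 statements merged into one kernel-verified Lean document; each statement's English description precedes it below -/
import Mathlib

section
/- Let K be a totally imaginary number field of degree n, Σ its set of complex embeddings, and r = (r_σ) a weight vector with r_σ ≥ 0 and ∑ r_σ = 1. Let Σ₊ = {σ : r_σ > 0}, r = max r_σ, ‖q‖_r = max_{σ∈Σ₊} |σ(q)|^{1/r_σ}, and H(q) = max_{σ∈Σ₊} |σ(q)| ‖q‖_r^{r_σ}. Then for every q in O_K(r,ε) = {q ∈ O_K \ {0} : max_{σ∉Σ₊} |σ(q)| ≤ ε} with ε < 1, one has 1 ≤ ‖q‖_r^{1/n} ≤ H(q) ≤ ‖q‖_r^{2r}. -/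
open NumberField

/-- The weighted norm `‖q‖_r = max_{σ ∈ Σ₊} |σ(q)|^{1/r_σ}`. -/
noncomputable def rnorm (K : Type*) [Field K] (r : (K →+* ℂ) → ℝ) (q : K) : ℝ :=
  ⨆ σ : {σ : K →+* ℂ // 0 < r σ}, ‖σ.1 q‖ ^ (1 / r σ.1)

/-- The height `H(q) = max_{σ ∈ Σ₊} |σ(q)| ‖q‖_r^{r_σ}`. -/
noncomputable def height (K : Type*) [Field K] (r : (K →+* ℂ) → ℝ) (q : K) : ℝ :=
  ⨆ σ : {σ : K →+* ℂ // 0 < r σ}, ‖σ.1 q‖ * rnorm K r q ^ (r σ.1)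

lemma prod_abs_eq_abs_norm (K : Type*) [Field K] [NumberField K] (x : K) :
    ∏ σ : K →+* ℂ, ‖σ x‖ = |Algebra.norm ℚ x| := by
  have h := congr_arg (norm : ℂ → ℝ) (Algebra.norm_eq_prod_embeddings ℚ ℂ x)
  rw [norm_prod] at h
  rw [Fintype.prod_equiv (RingHom.equivRatAlgHom K ℂ) (fun σ => ‖σ x‖)
      (fun φ => ‖φ x‖) fun _ => by simp [RingHom.equivRatAlgHom_apply]]
  rw [← h, eq_ratCast]
  rw [show ((((Algebra.norm ℚ) x : ℚ) : ℂ)) = (((Algebra.norm ℚ x : ℚ) : ℝ) : ℂ) by push_cast; ring,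
    Complex.norm_real, Real.norm_eq_abs, Rat.cast_abs]

lemma one_le_abs_norm (K : Type*) [Field K] [NumberField K] (q : 𝓞 K) (hq : q ≠ 0) :
    1 ≤ |Algebra.norm ℚ (q : K)| := by
  rw [← Algebra.coe_norm_int]
  have h : Algebra.norm ℤ q ≠ 0 := by
    rw [Algebra.norm_ne_zero_iff]
    exact hq
  rw [← Int.cast_abs]
  exact_mod_cast Int.one_le_abs (by simpa using h)

/-- For `q ∈ 𝓞_K(r,ε)` with `ε < 1`:
`1 ≤ ‖q‖_r^{1/n} ≤ H(q) ≤ ‖q‖_r^{2r}` where `r = max_σ r_σ` and `n = [K : ℚ]`. -/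
theorem stmt_1 (K : Type*) [Field K] [NumberField K] (htot : IsEmpty (K →+* ℝ))
    (r : (K →+* ℂ) → ℝ) (hr : ∀ σ, 0 ≤ r σ) (hsum : ∑ σ : K →+* ℂ, r σ = 1)
    (ε : ℝ) (hε0 : 0 < ε) (hε1 : ε < 1) (q : 𝓞 K) (hq : q ≠ 0)
    (hqε : ∀ σ : K →+* ℂ, r σ = 0 → ‖σ (q : K)‖ ≤ ε) :
    1 ≤ rnorm K r (q : K) ^ ((1 : ℝ) / (Module.finrank ℚ K)) ∧
    rnorm K r (q : K) ^ ((1 : ℝ) / (Module.finrank ℚ K)) ≤ height K r (q : K) ∧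
    height K r (q : K) ≤ rnorm K r (q : K) ^ (2 * ⨆ σ : K →+* ℂ, r σ) := by
  classical
  set N := rnorm K r (q : K) with hN
  set H := height K r (q : K) with hH
  have hqK : (q : K) ≠ 0 := by exact_mod_cast hq
  -- Σ₊ as a subtype
  have hSne : Nonempty {σ : K →+* ℂ // 0 < r σ} := by
    by_contra h
    rw [not_nonempty_iff] at h
    have : ∑ σ : K →+* ℂ, r σ = 0 := by
      apply Finset.sum_eq_zero
      intro σ _
      by_contra hσ
      exact h.false ⟨σ, lt_of_le_of_ne (hr σ) (Ne.symm hσ)⟩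
    rw [hsum] at this; norm_num at this
  have habspos : ∀ σ : K →+* ℂ, 0 < ‖σ (q : K)‖ := fun σ =>
    norm_pos_iff.2 (fun h => hqK (σ.injective (by simpa using h)))
  -- N is positive
  have hbdd : ∀ f : {σ : K →+* ℂ // 0 < r σ} → ℝ, BddAbove (Set.range f) :=
    fun f => (Set.finite_range f).bddAbove
  have hleN : ∀ σ : {σ : K →+* ℂ // 0 < r σ},
      ‖σ.1 (q : K)‖ ^ (1 / r σ.1) ≤ N := by
    intro σ
    rw [hN, rnorm]
    exact le_ciSup (f := fun σ : {σ : K →+* ℂ // 0 < r σ} =>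
      ‖σ.1 (q : K)‖ ^ (1 / r σ.1)) (hbdd _) σ
  have hNpos : 0 < N := by
    obtain ⟨σ0⟩ := hSne
    calc (0:ℝ) < ‖σ0.1 (q : K)‖ ^ (1 / r σ0.1) :=
          Real.rpow_pos_of_pos (habspos σ0.1) _
      _ ≤ N := hleN σ0
  have hNnn : (0:ℝ) ≤ N := hNpos.le
  -- each |σ q| ≤ N ^ r σ for σ ∈ Σ₊
  have hle : ∀ σ : {σ : K →+* ℂ // 0 < r σ}, ‖σ.1 (q : K)‖ ≤ N ^ r σ.1 := by
    intro σ
    have h1 : ‖σ.1 (q : K)‖ ^ (1 / r σ.1) ≤ N := hleN σ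
    have h2 := Real.rpow_le_rpow (Real.rpow_nonneg (norm_nonneg _) _) h1 (hr σ.1)
    rwa [← Real.rpow_mul (norm_nonneg _), one_div, inv_mul_cancel₀ σ.2.ne',
      Real.rpow_one] at h2
  -- the filter Finset
  set S : Finset (K →+* ℂ) := Finset.univ.filter (fun σ => 0 < r σ) with hSdef
  have hSne' : S.Nonempty := ⟨hSne.some.1, by simp [hSdef, hSne.some.2]⟩
  -- norm bound: product over all embeddings ≥ 1
  have hnorm : 1 ≤ ∏ σ : K →+* ℂ, ‖σ (q : K)‖ := by
    rw [prod_abs_eq_abs_norm]; exact_mod_cast one_le_abs_norm K q hq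
  -- product over Σ₊ ≥ 1
  have hprodS : 1 ≤ ∏ σ ∈ S, ‖σ (q : K)‖ := by
    have hsplit : (∏ σ : K →+* ℂ, ‖σ (q : K)‖) =
        (∏ σ ∈ S, ‖σ (q : K)‖) * ∏ σ ∈ Sᶜ, ‖σ (q : K)‖ :=
      (Finset.prod_mul_prod_compl S _).symm
    have hc : (∏ σ ∈ Sᶜ, ‖σ (q : K)‖) ≤ 1 := by
      apply Finset.prod_le_one (fun σ _ => norm_nonneg _)
      intro σ hσ
      have : ¬ 0 < r σ := by simpa [hSdef] using hσ
      exact le_trans (hqε σ (le_antisymm (not_lt.1 this) (hr σ))) hε1.le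
    calc (1:ℝ) ≤ ∏ σ : K →+* ℂ, ‖σ (q : K)‖ := hnorm
      _ = _ * _ := hsplit
      _ ≤ (∏ σ ∈ S, ‖σ (q : K)‖) * 1 := by
          apply mul_le_mul_of_nonneg_left hc
          exact Finset.prod_nonneg fun σ _ => norm_nonneg _
      _ = _ := mul_one _
  -- sum of r over S is 1
  have hsumS : ∑ σ ∈ S, r σ = 1 := by
    rw [← hsum]
    apply Finset.sum_subset (Finset.subset_univ S)
    intro σ _ hσ
    have : ¬ 0 < r σ := by simpa [hSdef] using hσ
    exact le_antisymm (not_lt.1 this) (hr σ)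
  -- product of bounds: ∏_{S} N ^ r σ = N
  have hprodN : (∏ σ ∈ S, N ^ r σ) = N := by
    rw [← Real.rpow_sum_of_pos hNpos, hsumS, Real.rpow_one]
  -- 1 ≤ N
  have hN1 : 1 ≤ N := by
    calc (1:ℝ) ≤ ∏ σ ∈ S, ‖σ (q : K)‖ := hprodS
      _ ≤ ∏ σ ∈ S, N ^ r σ := Finset.prod_le_prod (fun σ _ => norm_nonneg _)
          (fun σ hσ => hle ⟨σ, by simpa [hSdef] using hσ⟩)
      _ = N := hprodN
  -- n and cardinalities
  have hn : Fintype.card (K →+* ℂ) = Module.finrank ℚ K := Embeddings.card K ℂ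
  have hnpos : 0 < Module.finrank ℚ K := Module.finrank_pos
  have hcard : S.card ≤ Module.finrank ℚ K := by
    rw [← hn]; exact Finset.card_le_univ S
  have hcardpos : 0 < S.card := Finset.card_pos.2 hSne'
  -- 1 ≤ N ^ (1/n)
  have goal1 : 1 ≤ N ^ ((1:ℝ) / (Module.finrank ℚ K)) := by
    calc (1:ℝ) = 1 ^ ((1:ℝ) / (Module.finrank ℚ K)) := (Real.one_rpow _).symm
      _ ≤ N ^ ((1:ℝ) / (Module.finrank ℚ K)) :=
          Real.rpow_le_rpow zero_le_one hN1 (by positivity)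
  refine ⟨goal1, ?_, ?_⟩
  · -- N ^ (1/n) ≤ H
    have hleH : ∀ σ : {σ : K →+* ℂ // 0 < r σ},
        ‖σ.1 (q : K)‖ * N ^ r σ.1 ≤ H := by
      intro σ
      rw [hH, height, ← hN]
      exact le_ciSup (f := fun σ : {σ : K →+* ℂ // 0 < r σ} =>
        ‖σ.1 (q : K)‖ * N ^ r σ.1) (hbdd _) σ
    have hHnn : 0 ≤ H := by
      obtain ⟨σ0⟩ := hSne
      refine le_trans ?_ (hleH σ0)
      positivity
    -- N ≤ H ^ S.card
    have hNH : N ≤ H ^ (S.card : ℕ) := by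
      have hfac : ∀ σ ∈ S, ‖σ (q : K)‖ * N ^ r σ ≤ H := by
        intro σ hσ
        exact hleH ⟨σ, by simpa [hSdef] using hσ⟩
      calc N = 1 * N := (one_mul N).symm
        _ ≤ (∏ σ ∈ S, ‖σ (q : K)‖) * ∏ σ ∈ S, N ^ r σ := by
            rw [hprodN]
            exact mul_le_mul_of_nonneg_right hprodS hNnn
        _ = ∏ σ ∈ S, ‖σ (q : K)‖ * N ^ r σ := (Finset.prod_mul_distrib).symm
        _ ≤ ∏ σ ∈ S, H := Finset.prod_le_prod (fun σ _ => by positivity) hfac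
        _ = H ^ S.card := Finset.prod_const H
    -- hence N ^ (1/card) ≤ H
    have h1 : N ^ ((1:ℝ) / (S.card : ℝ)) ≤ H := by
      have := Real.rpow_le_rpow hNnn hNH (by positivity : (0:ℝ) ≤ 1 / (S.card : ℝ))
      rwa [← Real.rpow_natCast H S.card, ← Real.rpow_mul hHnn,
        mul_one_div, div_self (by exact_mod_cast hcardpos.ne' : (S.card : ℝ) ≠ 0),
        Real.rpow_one] at this
    refine le_trans ?_ h1
    apply Real.rpow_le_rpow_of_exponent_le hN1
    apply div_le_div_of_nonneg_left zero_le_one (by exact_mod_cast hcardpos)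
    exact_mod_cast hcard
  · -- H ≤ N ^ (2 * sup r)
    have hbdd' : BddAbove (Set.range r) := (Set.finite_range r).bddAbove
    rw [hH, height, ← hN]
    apply ciSup_le
    intro σ
    have hrle : r σ.1 ≤ ⨆ τ : K →+* ℂ, r τ := le_ciSup hbdd' σ.1
    calc ‖σ.1 (q : K)‖ * N ^ r σ.1 ≤ N ^ r σ.1 * N ^ r σ.1 :=
          mul_le_mul_of_nonneg_right (hle σ) (Real.rpow_nonneg hNnn _)
      _ = N ^ (r σ.1 + r σ.1) := (Real.rpow_add hNpos _ _).symm
      _ ≤ N ^ (2 * ⨆ τ : K →+* ℂ, r τ) := by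
          apply Real.rpow_le_rpow_of_exponent_le hN1
          rw [two_mul]
          exact add_le_add hrle hrle
end

section
/- Let K be a totally imaginary number field of degree n and let ψ: ∏_{j=1}^n SL₂(ℂ) → SL_{2n}(ℂ) be the block-diagonal interleaving homomorphism sending ((a₁ⱼ, a₂ⱼ; a₃ⱼ, a₄ⱼ))_{j=1..n} to the 2×2 block matrix with blocks diag(a₁,₁,…,a₁,ₙ), diag(a₂,₁,…,a₂,ₙ), diag(a₃,₁,…,a₃,ₙ), diag(a₄,₁,…,a₄,ₙ). Let L_K = D_K^{−1/(2n)}Θ(O_K) × D_K^{−1/(2n)}Θ(O_K) ⊂ ℂ^{2n}, where Θ(p) = (σ(p))_{σ∈Σ}. Then the stabilizer {g ∈ ∏ SL₂(ℂ) : ψ(g) L_K = L_K} equals Θ(SL₂(O_K)) = {(σ(g))_{σ∈Σ} : g ∈ SL₂(O_K)}. -/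
open NumberField

/-- The stabilizer of the lattice
`L_K = D_K^{-1/(2n)} Θ(𝓞_K) × D_K^{-1/(2n)} Θ(𝓞_K) ⊂ ℂ^Σ × ℂ^Σ` under the interleaved
block-diagonal action `ψ` of `∏_σ SL₂(ℂ)` equals `Θ(SL₂(𝓞_K))`. -/
theorem stmt_3 (K : Type*) [Field K] [NumberField K] (htot : IsEmpty (K →+* ℝ))
    (g : (K →+* ℂ) → Matrix (Fin 2) (Fin 2) ℂ) (hg : ∀ σ, (g σ).det = 1) :
    (fun x : ((K →+* ℂ) → ℂ) × ((K →+* ℂ) → ℂ) =>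
        ((fun σ => g σ 0 0 * x.1 σ + g σ 0 1 * x.2 σ,
          fun σ => g σ 1 0 * x.1 σ + g σ 1 1 * x.2 σ) :
          ((K →+* ℂ) → ℂ) × ((K →+* ℂ) → ℂ))) ''
      {x : ((K →+* ℂ) → ℂ) × ((K →+* ℂ) → ℂ) | ∃ p q : 𝓞 K,
        x = (fun σ => (((|NumberField.discr K| : ℝ) ^
                (-(1 / (2 * (Module.finrank ℚ K) : ℝ))) : ℝ) : ℂ) * σ (p : K),
             fun σ => (((|NumberField.discr K| : ℝ) ^
                (-(1 / (2 * (Module.finrank ℚ K) : ℝ))) : ℝ) : ℂ) * σ (q : K))} =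
    {x : ((K →+* ℂ) → ℂ) × ((K →+* ℂ) → ℂ) | ∃ p q : 𝓞 K,
        x = (fun σ => (((|NumberField.discr K| : ℝ) ^
                (-(1 / (2 * (Module.finrank ℚ K) : ℝ))) : ℝ) : ℂ) * σ (p : K),
             fun σ => (((|NumberField.discr K| : ℝ) ^
                (-(1 / (2 * (Module.finrank ℚ K) : ℝ))) : ℝ) : ℂ) * σ (q : K))} ↔
    ∃ γ : Matrix (Fin 2) (Fin 2) (𝓞 K), γ.det = 1 ∧
      ∀ (σ : K →+* ℂ) (i j : Fin 2), g σ i j = σ ((γ i j : 𝓞 K) : K) := by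
  set c : ℝ := ((|NumberField.discr K| : ℝ) ^
      (-(1 / (2 * (Module.finrank ℚ K) : ℝ))) : ℝ) with hcdef
  have hcpos : 0 < c := by
    apply Real.rpow_pos_of_pos
    have := NumberField.discr_ne_zero K
    positivity
  have hc0 : (c : ℂ) ≠ 0 := by exact_mod_cast hcpos.ne'
  constructor
  · intro h
    -- apply to basis vectors
    have he1 : (fun x : ((K →+* ℂ) → ℂ) × ((K →+* ℂ) → ℂ) =>
        ((fun σ => g σ 0 0 * x.1 σ + g σ 0 1 * x.2 σ,
          fun σ => g σ 1 0 * x.1 σ + g σ 1 1 * x.2 σ) :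
          ((K →+* ℂ) → ℂ) × ((K →+* ℂ) → ℂ)))
        ((fun σ => (c : ℂ) * σ (((1 : 𝓞 K) : K)), fun σ => (c : ℂ) * σ (((0 : 𝓞 K) : K))))
        ∈ {x : ((K →+* ℂ) → ℂ) × ((K →+* ℂ) → ℂ) | ∃ p q : 𝓞 K,
        x = (fun σ => (c : ℂ) * σ (p : K), fun σ => (c : ℂ) * σ (q : K))} := by
      rw [← h]
      exact Set.mem_image_of_mem _ ⟨1, 0, rfl⟩
    have he2 : (fun x : ((K →+* ℂ) → ℂ) × ((K →+* ℂ) → ℂ) =>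
        ((fun σ => g σ 0 0 * x.1 σ + g σ 0 1 * x.2 σ,
          fun σ => g σ 1 0 * x.1 σ + g σ 1 1 * x.2 σ) :
          ((K →+* ℂ) → ℂ) × ((K →+* ℂ) → ℂ)))
        ((fun σ => (c : ℂ) * σ (((0 : 𝓞 K) : K)), fun σ => (c : ℂ) * σ (((1 : 𝓞 K) : K))))
        ∈ {x : ((K →+* ℂ) → ℂ) × ((K →+* ℂ) → ℂ) | ∃ p q : 𝓞 K,
        x = (fun σ => (c : ℂ) * σ (p : K), fun σ => (c : ℂ) * σ (q : K))} := by
      rw [← h]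
      exact Set.mem_image_of_mem _ ⟨0, 1, rfl⟩
    obtain ⟨a, b, hab⟩ := he1
    obtain ⟨a', b', hab'⟩ := he2
    have h1 := congrArg Prod.fst hab
    have h2 := congrArg Prod.snd hab
    have h1' := congrArg Prod.fst hab'
    have h2' := congrArg Prod.snd hab'
    simp only at h1 h2 h1' h2'
    have ha : ∀ σ : K →+* ℂ, g σ 0 0 = σ (a : K) := fun σ => by
      have := congrFun h1 σ
      simp only [map_one, map_zero] at this
      field_simp at this
      simpa using this
    have hb : ∀ σ : K →+* ℂ, g σ 1 0 = σ (b : K) := fun σ => by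
      have := congrFun h2 σ
      simp only [map_one, map_zero] at this
      field_simp at this
      simpa using this
    have ha' : ∀ σ : K →+* ℂ, g σ 0 1 = σ (a' : K) := fun σ => by
      have := congrFun h1' σ
      simp only [map_one, map_zero] at this
      field_simp at this
      simpa using this
    have hb' : ∀ σ : K →+* ℂ, g σ 1 1 = σ (b' : K) := fun σ => by
      have := congrFun h2' σ
      simp only [map_one, map_zero] at this
      field_simp at this
      simpa using this
    refine ⟨!![a, a'; b, b'], ?_, ?_⟩
    · obtain ⟨σ⟩ : Nonempty (K →+* ℂ) := by
        have hcard := NumberField.Embeddings.card K ℂ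
        exact Fintype.card_pos_iff.mp (by rw [hcard]; exact Module.finrank_pos)
      have hdet := hg σ
      rw [Matrix.det_fin_two] at hdet
      rw [ha, hb, ha', hb'] at hdet
      rw [Matrix.det_fin_two_of]
      have : σ ((a * b' - a' * b : 𝓞 K) : K) = σ ((1 : 𝓞 K) : K) := by
        push_cast
        rw [map_sub, map_mul, map_mul, map_one]
        linear_combination hdet
      have := σ.injective this
      exact_mod_cast this
    · intro σ i j
      fin_cases i <;> fin_cases j <;>
        simp [ha σ, hb σ, ha' σ, hb' σ]
  · rintro ⟨γ, hdet, hγ⟩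
    rw [Matrix.det_fin_two] at hdet
    apply Set.eq_of_subset_of_subset
    · rintro _ ⟨x, ⟨p, q, rfl⟩, rfl⟩
      refine ⟨γ 0 0 * p + γ 0 1 * q, γ 1 0 * p + γ 1 1 * q, ?_⟩
      refine Prod.ext (funext fun σ => ?_) (funext fun σ => ?_) <;>
      · simp only [hγ σ]
        push_cast
        rw [map_add, map_mul, map_mul]
        ring
    · rintro _ ⟨p, q, rfl⟩
      refine ⟨(fun σ => (c : ℂ) * σ ((γ 1 1 * p - γ 0 1 * q : 𝓞 K) : K),
              fun σ => (c : ℂ) * σ ((γ 0 0 * q - γ 1 0 * p : 𝓞 K) : K)),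
        ⟨γ 1 1 * p - γ 0 1 * q, γ 0 0 * q - γ 1 0 * p, rfl⟩, ?_⟩
      have key1 : γ 0 0 * (γ 1 1 * p - γ 0 1 * q) + γ 0 1 * (γ 0 0 * q - γ 1 0 * p) = p := by
        linear_combination p * hdet
      have key2 : γ 1 0 * (γ 1 1 * p - γ 0 1 * q) + γ 1 1 * (γ 0 0 * q - γ 1 0 * p) = q := by
        linear_combination q * hdet
      refine Prod.ext (funext fun σ => ?_) (funext fun σ => ?_)
      · simp only [hγ σ]
        rw [show ((c : ℂ) * σ (p : K)) = (c : ℂ) * σ ((γ 0 0 * (γ 1 1 * p - γ 0 1 * q) +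
            γ 0 1 * (γ 0 0 * q - γ 1 0 * p) : 𝓞 K) : K) by rw [key1]]
        push_cast
        simp only [map_add, map_sub, map_mul]
        ring
      · simp only [hγ σ]
        rw [show ((c : ℂ) * σ (q : K)) = (c : ℂ) * σ ((γ 1 0 * (γ 1 1 * p - γ 0 1 * q) +
            γ 1 1 * (γ 0 0 * q - γ 1 0 * p) : 𝓞 K) : K) by rw [key2]]
        push_cast
        simp only [map_add, map_sub, map_mul]
        ring
end

section
/- Dani correspondence (one direction, Mahler criterion step): with g_r(t) = diag over σ of (e^{r_σ t}, e^{−r_σ t}) in ∏_σ SL₂(ℂ) and ι(z) the upper-triangular unipotent with entries z_σ, the vector z ∈ ℂ^Σ lies in Bad(K, r) if and only if there is δ > 0 such that for all t ≥ 0, the lattice ψ(g_r(t) ι(z)) L_K ⊂ ℂ^{2n} contains no nonzero vector of norm less than δ. -/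
open NumberField

/-- The quantity whose infimum over `(p,q)` defines `Bad(K,r)`. -/
noncomputable def badDist (K : Type*) [Field K] (r : (K →+* ℂ) → ℝ)
    (z : (K →+* ℂ) → ℂ) (p q : K) : ℝ :=
  max (⨆ σ : {σ : K →+* ℂ // 0 < r σ},
        rnorm K r q ^ (r σ.1) * ‖σ.1 q * z σ.1 + σ.1 p‖)
      (⨆ σ : {σ : K →+* ℂ // r σ = 0},
        max (‖σ.1 q * z σ.1 + σ.1 p‖) (‖σ.1 q‖))

section Aux

variable {K : Type*} [Field K] [NumberField K]

lemma aux_one_le_prod_abs (a : 𝓞 K) (ha : a ≠ 0) :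
    (1:ℝ) ≤ ∏ φ : K →+* ℂ, ‖φ (a : K)‖ := by
  have hQ : (1:ℚ) ≤ |Algebra.norm ℚ (a : K)| := by
    have hZ : 1 ≤ |Algebra.norm ℤ a| := Int.one_le_abs (Algebra.norm_ne_zero_iff.mpr ha)
    rw [← Algebra.coe_norm_int]; exact_mod_cast hZ
  have h := congr_arg (norm : ℂ → ℝ) (Algebra.norm_eq_prod_embeddings ℚ ℂ (a : K))
  rw [norm_prod] at h
  calc (1:ℝ) ≤ ((|Algebra.norm ℚ (a:K)| : ℚ) : ℝ) := by exact_mod_cast hQ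
    _ = ‖(algebraMap ℚ ℂ) (Algebra.norm ℚ (a:K))‖ := by
        rw [eq_ratCast, Rat.cast_abs, Complex.norm_ratCast]
    _ = ∏ f : K →ₐ[ℚ] ℂ, ‖f (a:K)‖ := h
    _ = ∏ φ : K →+* ℂ, ‖φ (a:K)‖ :=
        (Fintype.prod_equiv (RingHom.equivRatAlgHom K ℂ) _ _
          (fun _ => by simp [RingHom.equivRatAlgHom_apply])).symm

instance : Nonempty (K →+* ℂ) := by
  rw [← Fintype.card_pos_iff, NumberField.Embeddings.card K ℂ]
  exact Module.finrank_pos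

lemma aux_exists_one_le_abs (a : 𝓞 K) (ha : a ≠ 0) :
    ∃ σ : K →+* ℂ, 1 ≤ ‖σ (a : K)‖ := by
  by_contra hcon
  push_neg at hcon
  have hane : (a : K) ≠ 0 := by exact_mod_cast ha
  have h1 : ∏ φ : K →+* ℂ, ‖φ (a : K)‖ < 1 := by
    calc ∏ φ : K →+* ℂ, ‖φ (a : K)‖ < ∏ _φ : K →+* ℂ, (1:ℝ) :=
          Finset.prod_lt_prod_of_nonempty
            (fun φ _ => norm_pos_iff.mpr ((map_ne_zero φ).mpr hane))
            (fun φ _ => hcon φ) Finset.univ_nonempty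
      _ = 1 := Finset.prod_const_one
  exact absurd (aux_one_le_prod_abs a ha) (not_le.mpr h1)

lemma aux_ciSup_exists_le {ι : Type*} [Finite ι] [Nonempty ι] (f : ι → ℝ) :
    ∃ i, ⨆ j, f j ≤ f i := by
  obtain ⟨i, hi⟩ := Finite.exists_max f
  exact ⟨i, ciSup_le hi⟩

variable {r : (K →+* ℂ) → ℝ}

lemma aux_abs_le_rnorm_rpow {q : K} {σ : K →+* ℂ} (hσ : 0 < r σ) :
    ‖σ q‖ ≤ rnorm K r q ^ (r σ) := by
  have h1 : ‖σ q‖ ^ (1 / r σ) ≤ rnorm K r q :=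
    le_ciSup (f := fun τ : {σ : K →+* ℂ // 0 < r σ} => ‖τ.1 q‖ ^ (1 / r τ.1))
      (Set.Finite.bddAbove (Set.finite_range _)) ⟨σ, hσ⟩
  have h2 := Real.rpow_le_rpow (Real.rpow_nonneg (norm_nonneg _) _) h1 hσ.le
  rwa [← Real.rpow_mul (norm_nonneg _), one_div_mul_cancel hσ.ne', Real.rpow_one] at h2

lemma aux_rnorm_nonneg (hex : ∃ σ, 0 < r σ) (q : K) : 0 ≤ rnorm K r q := by
  obtain ⟨σ, hσ⟩ := hex
  exact le_trans (Real.rpow_nonneg (norm_nonneg _) _)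
    (le_ciSup (f := fun τ : {σ : K →+* ℂ // 0 < r σ} => ‖τ.1 q‖ ^ (1 / r τ.1))
      (Set.Finite.bddAbove (Set.finite_range _)) ⟨σ, hσ⟩)

lemma aux_rnorm_pos (hex : ∃ σ, 0 < r σ) {q : K} (hq : q ≠ 0) : 0 < rnorm K r q := by
  obtain ⟨σ, hσ⟩ := hex
  refine lt_of_lt_of_le ?_
    (le_ciSup (f := fun τ : {σ : K →+* ℂ // 0 < r σ} => ‖τ.1 q‖ ^ (1 / r τ.1))
      (Set.Finite.bddAbove (Set.finite_range _)) ⟨σ, hσ⟩)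
  exact Real.rpow_pos_of_pos (norm_pos_iff.mpr ((map_ne_zero σ).mpr hq)) _

lemma aux_one_le_rnorm (hr : ∀ σ, 0 ≤ r σ) (hsum : ∑ σ : K →+* ℂ, r σ = 1)
    (q : 𝓞 K) (hq : q ≠ 0)
    (h0 : ∀ σ : K →+* ℂ, r σ = 0 → ‖σ (q:K)‖ ≤ 1) : 1 ≤ rnorm K r (q:K) := by
  classical
  have hex : ∃ σ : K →+* ℂ, 0 < r σ := by
    by_contra h; push_neg at h
    have h2 : ∑ σ : K →+* ℂ, r σ = 0 :=
      Finset.sum_eq_zero (fun σ _ => le_antisymm (h σ) (hr σ))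
    rw [hsum] at h2; norm_num at h2
  have hqK : (q : K) ≠ 0 := by exact_mod_cast hq
  set N := rnorm K r (q:K) with hNdef
  have hNpos : 0 < N := aux_rnorm_pos hex hqK
  set P : Finset (K →+* ℂ) := Finset.univ.filter (fun σ => 0 < r σ) with hP
  have hsplit := Finset.prod_filter_mul_prod_filter_not Finset.univ (fun σ => 0 < r σ)
    (fun σ => ‖σ (q:K)‖)
  have hprodP : ∏ σ ∈ P, ‖σ (q:K)‖ ≤ ∏ σ ∈ P, N ^ (r σ) :=
    Finset.prod_le_prod (fun σ _ => norm_nonneg _)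
      (fun σ hσ => aux_abs_le_rnorm_rpow (Finset.mem_filter.mp hσ).2)
  have hrpow : ∏ σ ∈ P, N ^ (r σ) = N ^ (∑ σ ∈ P, r σ) := by
    simp_rw [Real.rpow_def_of_pos hNpos, Finset.mul_sum, Real.exp_sum]
  have hsumP : ∑ σ ∈ P, r σ = 1 := by
    rw [← hsum]
    refine Finset.sum_subset (Finset.filter_subset _ _) (fun σ _ hσ => ?_)
    have h2 : ¬ 0 < r σ := by simpa [hP] using hσ
    exact le_antisymm (not_lt.mp h2) (hr σ)
  have hle : ∏ σ ∈ P, ‖σ (q:K)‖ ≤ N := by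
    have h3 : ∏ σ ∈ P, ‖σ (q:K)‖ ≤ N ^ (∑ σ ∈ P, r σ) := hrpow ▸ hprodP
    rwa [hsumP, Real.rpow_one] at h3
  have hnegP : ∏ σ ∈ Finset.univ.filter (fun σ => ¬ 0 < r σ), ‖σ (q:K)‖ ≤ 1 :=
    Finset.prod_le_one (fun σ _ => norm_nonneg _)
      (fun σ hσ => h0 σ (le_antisymm (not_lt.mp (Finset.mem_filter.mp hσ).2) (hr σ)))
  have hnegP0 : 0 ≤ ∏ σ ∈ Finset.univ.filter (fun σ => ¬ 0 < r σ), ‖σ (q:K)‖ :=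
    Finset.prod_nonneg (fun σ _ => norm_nonneg _)
  have hPnn : 0 ≤ ∏ σ ∈ P, ‖σ (q:K)‖ :=
    Finset.prod_nonneg (fun σ _ => norm_nonneg _)
  have hall := aux_one_le_prod_abs q hq
  rw [← hsplit] at hall
  nlinarith

end Aux

set_option maxHeartbeats 1000000 in
/-- Dani correspondence (Mahler criterion step): `z ∈ Bad(K,r)` if and
only if there is `δ > 0` such that for all `t ≥ 0` every nonzero vector of the lattice
`ψ(g_r(t) ι(z)) L_K`, i.e. every vector
`((e^{r_σ t} c (σ(p) + z_σ σ(q)))_σ, (e^{-r_σ t} c σ(q))_σ)` with `(p,q) ≠ (0,0)`,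
has norm at least `δ` (here `c = D_K^{-1/(2n)}`). -/
theorem stmt_14 (K : Type*) [Field K] [NumberField K] (htot : IsEmpty (K →+* ℝ))
    (r : (K →+* ℂ) → ℝ) (hr : ∀ σ, 0 ≤ r σ) (hsum : ∑ σ : K →+* ℂ, r σ = 1)
    (z : (K →+* ℂ) → ℂ) :
    (∃ δ > 0, ∀ p q : 𝓞 K, q ≠ 0 → δ ≤ badDist K r z (p : K) (q : K)) ↔
    (∃ δ > 0, ∀ t : ℝ, 0 ≤ t → ∀ p q : 𝓞 K, (p, q) ≠ (0, 0) →
      δ ≤ ‖((fun σ => (Real.exp (r σ * t) : ℂ) *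
              (((|NumberField.discr K| : ℝ) ^
                (-(1 / (2 * (Module.finrank ℚ K) : ℝ))) : ℝ) : ℂ) *
              (σ (p : K) + z σ * σ (q : K)),
            fun σ => (Real.exp (-(r σ * t)) : ℂ) *
              (((|NumberField.discr K| : ℝ) ^
                (-(1 / (2 * (Module.finrank ℚ K) : ℝ))) : ℝ) : ℂ) * σ (q : K)) :
            ((K →+* ℂ) → ℂ) × ((K →+* ℂ) → ℂ))‖) := by
  classical
  set c : ℝ := (|NumberField.discr K| : ℝ) ^ (-(1 / (2 * (Module.finrank ℚ K) : ℝ))) with hcdef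
  have hc : 0 < c := Real.rpow_pos_of_pos
    (by exact_mod_cast abs_pos.mpr (NumberField.discr_ne_zero K)) _
  have hex : ∃ σ : K →+* ℂ, 0 < r σ := by
    by_contra h; push_neg at h
    have h2 : ∑ σ : K →+* ℂ, r σ = 0 :=
      Finset.sum_eq_zero (fun σ _ => le_antisymm (h σ) (hr σ))
    rw [hsum] at h2; norm_num at h2
  have hexne : Nonempty {σ : K →+* ℂ // 0 < r σ} := ⟨⟨hex.choose, hex.choose_spec⟩⟩
  have hr1 : ∀ σ, r σ ≤ 1 := fun σ => by
    rw [← hsum]; exact Finset.single_le_sum (fun j _ => hr j) (Finset.mem_univ σ)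
  have key : ∀ (a : ℝ), 0 ≤ a → ∀ w : ℂ, ‖(a:ℂ) * (c:ℂ) * w‖ = a * c * ‖w‖ := by
    intro a ha w
    rw [norm_mul, norm_mul, Complex.norm_real, Complex.norm_real, Real.norm_eq_abs,
      Real.norm_eq_abs, abs_of_nonneg ha, abs_of_nonneg hc.le]
  constructor
  · rintro ⟨δ, hδ, H⟩
    refine ⟨c * min δ 1, mul_pos hc (lt_min hδ one_pos), ?_⟩
    intro t ht p q hpq
    suffices hsuf : ∃ σ : K →+* ℂ,
        min δ 1 ≤ Real.exp (r σ * t) * ‖σ (p:K) + z σ * σ (q:K)‖ ∨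
        min δ 1 ≤ Real.exp (-(r σ * t)) * ‖σ (q:K)‖ by
      obtain ⟨σ, h | h⟩ := hsuf
      · refine le_trans ?_ (le_trans (norm_le_pi_norm _ σ) (norm_fst_le _))
        show c * min δ 1 ≤ ‖(Real.exp (r σ * t) : ℂ) * (c:ℂ) * (σ (p:K) + z σ * σ (q:K))‖
        rw [key _ (Real.exp_pos _).le]
        nlinarith
      · refine le_trans ?_ (le_trans (norm_le_pi_norm _ σ) (norm_snd_le _))
        show c * min δ 1 ≤ ‖(Real.exp (-(r σ * t)) : ℂ) * (c:ℂ) * (σ (q:K))‖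
        rw [key _ (Real.exp_pos _).le]
        nlinarith
    by_cases hq : q = 0
    · subst hq
      have hp : p ≠ 0 := by rintro rfl; exact hpq (by simp)
      obtain ⟨σ, hσ1⟩ := aux_exists_one_le_abs p hp
      refine ⟨σ, Or.inl ?_⟩
      have hq0 : σ ((0 : 𝓞 K) : K) = 0 := by simp
      rw [hq0, mul_zero, add_zero]
      have he : 1 ≤ Real.exp (r σ * t) := Real.one_le_exp (mul_nonneg (hr σ) ht)
      calc min δ 1 ≤ 1 := min_le_right _ _
        _ ≤ Real.exp (r σ * t) * ‖σ (p:K)‖ := by nlinarith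
    · by_cases hN : Real.exp t ≤ rnorm K r (q:K)
      · obtain ⟨σ₀, hσ₀⟩ := aux_ciSup_exists_le
          (fun τ : {σ : K →+* ℂ // 0 < r σ} => ‖τ.1 (q:K)‖ ^ (1 / r τ.1))
        have h1 : Real.exp t ≤ ‖σ₀.1 (q:K)‖ ^ (1 / r σ₀.1) := le_trans hN hσ₀
        have h2 : Real.exp (r σ₀.1 * t) ≤ ‖σ₀.1 (q:K)‖ := by
          have h3 := Real.rpow_le_rpow (Real.exp_pos t).le h1 σ₀.2.le
          rwa [← Real.exp_mul, mul_comm t (r σ₀.1),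
            ← Real.rpow_mul (norm_nonneg _), one_div_mul_cancel σ₀.2.ne',
            Real.rpow_one] at h3
        refine ⟨σ₀.1, Or.inr ?_⟩
        have h4 : Real.exp (-(r σ₀.1 * t)) * Real.exp (r σ₀.1 * t) = 1 := by
          rw [← Real.exp_add]; simp
        calc min δ 1 ≤ 1 := min_le_right _ _
          _ = Real.exp (-(r σ₀.1 * t)) * Real.exp (r σ₀.1 * t) := h4.symm
          _ ≤ Real.exp (-(r σ₀.1 * t)) * ‖σ₀.1 (q:K)‖ :=
              mul_le_mul_of_nonneg_left h2 (Real.exp_pos _).le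
      · push_neg at hN
        have hbd := H p q hq
        unfold badDist at hbd
        rcases le_max_iff.mp hbd with h | h
        · obtain ⟨σ₀, hσ₀⟩ := aux_ciSup_exists_le
            (fun τ : {σ : K →+* ℂ // 0 < r σ} =>
              rnorm K r (q:K) ^ (r τ.1) * ‖τ.1 (q:K) * z τ.1 + τ.1 (p:K)‖)
          have h1 : δ ≤ rnorm K r (q:K) ^ (r σ₀.1) *
              ‖σ₀.1 (q:K) * z σ₀.1 + σ₀.1 (p:K)‖ := le_trans h hσ₀
          have hAA : σ₀.1 (q:K) * z σ₀.1 + σ₀.1 (p:K)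
              = σ₀.1 (p:K) + z σ₀.1 * σ₀.1 (q:K) := by ring
          rw [hAA] at h1
          have h2 : rnorm K r (q:K) ^ (r σ₀.1) ≤ Real.exp (r σ₀.1 * t) := by
            have h3 := Real.rpow_le_rpow (aux_rnorm_nonneg hex _) hN.le (hr σ₀.1)
            rwa [← Real.exp_mul, mul_comm t (r σ₀.1)] at h3
          refine ⟨σ₀.1, Or.inl ?_⟩
          calc min δ 1 ≤ δ := min_le_left _ _
            _ ≤ rnorm K r (q:K) ^ (r σ₀.1) *
                ‖σ₀.1 (p:K) + z σ₀.1 * σ₀.1 (q:K)‖ := h1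
            _ ≤ Real.exp (r σ₀.1 * t) *
                ‖σ₀.1 (p:K) + z σ₀.1 * σ₀.1 (q:K)‖ :=
              mul_le_mul_of_nonneg_right h2 (norm_nonneg _)
        · have hne : Nonempty {σ : K →+* ℂ // r σ = 0} := by
            by_contra hni
            rw [not_nonempty_iff] at hni
            rw [Real.iSup_of_isEmpty] at h
            linarith
          obtain ⟨σ₀, hσ₀⟩ := aux_ciSup_exists_le
            (fun τ : {σ : K →+* ℂ // r σ = 0} =>
              max (‖τ.1 (q:K) * z τ.1 + τ.1 (p:K)‖) (‖τ.1 (q:K)‖))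
          have h1 := le_trans h hσ₀
          have hr0 : r σ₀.1 = 0 := σ₀.2
          rcases le_max_iff.mp h1 with h2 | h2
          · refine ⟨σ₀.1, Or.inl ?_⟩
            have hAA : σ₀.1 (q:K) * z σ₀.1 + σ₀.1 (p:K)
                = σ₀.1 (p:K) + z σ₀.1 * σ₀.1 (q:K) := by ring
            rw [hr0, zero_mul, Real.exp_zero, one_mul, ← hAA]
            exact le_trans (min_le_left _ _) h2
          · refine ⟨σ₀.1, Or.inr ?_⟩
            rw [hr0, zero_mul, neg_zero, Real.exp_zero, one_mul]
            exact le_trans (min_le_left _ _) h2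
  · rintro ⟨δ, hδ, H⟩
    set P : Finset (K →+* ℂ) := Finset.univ.filter (fun σ => 0 < r σ) with hP
    have hPne : P.Nonempty := by
      obtain ⟨σ, hσ⟩ := hex
      exact ⟨σ, by simp [hP, hσ]⟩
    set ρ := P.inf' hPne r with hρdef
    have hρpos : 0 < ρ := (Finset.lt_inf'_iff hPne).mpr
      (fun σ hσ => (Finset.mem_filter.mp hσ).2)
    set s := max 0 (Real.log (2 * c / δ) / ρ) with hsdef
    have hs0 : 0 ≤ s := le_max_left _ _
    have hcs : c * Real.exp (-(ρ * s)) ≤ δ / 2 := by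
      have h1 : Real.log (2*c/δ) ≤ ρ * s := by
        calc Real.log (2*c/δ) = ρ * (Real.log (2*c/δ) / ρ) := by field_simp
          _ ≤ ρ * s := mul_le_mul_of_nonneg_left (le_max_right _ _) hρpos.le
      have h2 : 2*c/δ ≤ Real.exp (ρ * s) := by
        calc 2*c/δ = Real.exp (Real.log (2*c/δ)) := (Real.exp_log (by positivity)).symm
          _ ≤ _ := Real.exp_le_exp.mpr h1
      have hE := Real.exp_pos (ρ*s)
      rw [Real.exp_neg, mul_inv_le_iff₀ hE]
      rw [div_le_iff₀ hδ] at h2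
      nlinarith
    set ε := min 1 (δ / (2 * c * Real.exp s)) with hεdef
    have hεpos : 0 < ε := lt_min one_pos (by positivity)
    refine ⟨ε, hεpos, ?_⟩
    intro p q hq
    by_contra hlt
    push_neg at hlt
    unfold badDist at hlt
    have hSplus : ∀ σ : K →+* ℂ, 0 < r σ →
        rnorm K r (q:K) ^ (r σ) * ‖σ (q:K) * z σ + σ (p:K)‖ < ε := by
      intro σ hσ
      refine lt_of_le_of_lt (le_trans ?_ (le_max_left _ _)) hlt
      exact le_ciSup (f := fun τ : {σ : K →+* ℂ // 0 < r σ} =>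
          rnorm K r (q:K) ^ (r τ.1) * ‖τ.1 (q:K) * z τ.1 + τ.1 (p:K)‖)
        (Set.Finite.bddAbove (Set.finite_range _)) ⟨σ, hσ⟩
    have hSzero : ∀ σ : K →+* ℂ, r σ = 0 →
        max (‖σ (q:K) * z σ + σ (p:K)‖) (‖σ (q:K)‖) < ε := by
      intro σ hσ
      refine lt_of_le_of_lt (le_trans ?_ (le_max_right _ _)) hlt
      exact le_ciSup (f := fun τ : {σ : K →+* ℂ // r σ = 0} =>
          max (‖τ.1 (q:K) * z τ.1 + τ.1 (p:K)‖) (‖τ.1 (q:K)‖))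
        (Set.Finite.bddAbove (Set.finite_range _)) ⟨σ, hσ⟩
    have hN1 : 1 ≤ rnorm K r (q:K) := by
      refine aux_one_le_rnorm hr hsum q hq (fun σ h => ?_)
      have := lt_of_le_of_lt (le_max_right _ _) (hSzero σ h)
      have hε1 : ε ≤ 1 := min_le_left _ _
      linarith
    set N := rnorm K r (q:K) with hNdef
    have hNpos : 0 < N := lt_of_lt_of_le one_pos hN1
    set t := Real.log N + s with htdef
    have ht : 0 ≤ t := add_nonneg (Real.log_nonneg hN1) hs0
    have hεbound : ε ≤ δ / (2 * c * Real.exp s) := min_le_right _ _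
    have hes1 : 1 ≤ Real.exp s := Real.one_le_exp hs0
    have hcontr := H t ht p q (by
      intro hcontra
      exact hq (by simpa using congrArg Prod.snd hcontra))
    have hub : ‖((fun σ => (Real.exp (r σ * t) : ℂ) * (c : ℂ) * (σ (p:K) + z σ * σ (q:K)),
          fun σ => (Real.exp (-(r σ * t)) : ℂ) * (c : ℂ) * σ (q:K)) :
          ((K →+* ℂ) → ℂ) × ((K →+* ℂ) → ℂ))‖ < δ := by
      rw [Prod.norm_def]
      refine max_lt ((pi_norm_lt_iff hδ).mpr ?_) ((pi_norm_lt_iff hδ).mpr ?_)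
      · intro σ
        show ‖(Real.exp (r σ * t) : ℂ) * (c:ℂ) * (σ (p:K) + z σ * σ (q:K))‖ < δ
        rw [key _ (Real.exp_pos _).le]
        have hAA : ‖σ (p:K) + z σ * σ (q:K)‖
            = ‖σ (q:K) * z σ + σ (p:K)‖ := by ring_nf
        rcases (hr σ).eq_or_lt with h0 | hpos
        · rw [← h0, zero_mul, Real.exp_zero, one_mul, hAA]
          have hA := lt_of_le_of_lt (le_max_left _ _) (hSzero σ h0.symm)
          calc c * ‖σ (q:K) * z σ + σ (p:K)‖ < c * ε :=
                mul_lt_mul_of_pos_left hA hc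
            _ ≤ c * (δ / (2 * c * Real.exp s)) := mul_le_mul_of_nonneg_left hεbound hc.le
            _ ≤ δ / 2 := by
                have h9 : c * (δ / (2 * c * Real.exp s)) = δ / (2 * Real.exp s) := by
                  field_simp
                rw [h9, div_le_div_iff₀ (by positivity) (by norm_num)]
                nlinarith
            _ < δ := by linarith
        · have hA := hSplus σ hpos
          have hexp : Real.exp (r σ * t) = N ^ (r σ) * Real.exp (r σ * s) := by
            rw [htdef, mul_add, Real.exp_add, Real.rpow_def_of_pos hNpos,
              mul_comm (Real.log N) (r σ)]
          have hess : Real.exp (r σ * s) ≤ Real.exp s :=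
            Real.exp_le_exp.mpr (by nlinarith [hr1 σ, hr σ])
          have hANN : 0 ≤ ‖σ (q:K) * z σ + σ (p:K)‖ := norm_nonneg _
          have hNr : (0:ℝ) < N ^ (r σ) := Real.rpow_pos_of_pos hNpos _
          calc Real.exp (r σ * t) * c * ‖σ (p:K) + z σ * σ (q:K)‖
              = Real.exp (r σ * s) * c *
                (N ^ (r σ) * ‖σ (q:K) * z σ + σ (p:K)‖) := by
                rw [hexp, hAA]; ring
            _ ≤ Real.exp s * c * (N ^ (r σ) * ‖σ (q:K) * z σ + σ (p:K)‖) :=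
                mul_le_mul_of_nonneg_right (mul_le_mul_of_nonneg_right hess hc.le)
                  (mul_nonneg hNr.le hANN)
            _ < Real.exp s * c * ε := by
                have : (0:ℝ) < Real.exp s * c := by positivity
                exact mul_lt_mul_of_pos_left hA this
            _ ≤ Real.exp s * c * (δ / (2 * c * Real.exp s)) :=
                mul_le_mul_of_nonneg_left hεbound (by positivity)
            _ = δ / 2 := by field_simp
            _ < δ := by linarith
      · intro σ
        show ‖(Real.exp (-(r σ * t)) : ℂ) * (c:ℂ) * (σ (q:K))‖ < δ
        rw [key _ (Real.exp_pos _).le]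
        rcases (hr σ).eq_or_lt with h0 | hpos
        · rw [← h0, zero_mul, neg_zero, Real.exp_zero, one_mul]
          have hB := lt_of_le_of_lt (le_max_right _ _) (hSzero σ h0.symm)
          calc c * ‖σ (q:K)‖ < c * ε := mul_lt_mul_of_pos_left hB hc
            _ ≤ c * (δ / (2 * c * Real.exp s)) := mul_le_mul_of_nonneg_left hεbound hc.le
            _ ≤ δ / 2 := by
                have h9 : c * (δ / (2 * c * Real.exp s)) = δ / (2 * Real.exp s) := by
                  field_simp
                rw [h9, div_le_div_iff₀ (by positivity) (by norm_num)]
                nlinarith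
            _ < δ := by linarith
        · have hB : ‖σ (q:K)‖ ≤ N ^ (r σ) := aux_abs_le_rnorm_rpow hpos
          have hρle : ρ ≤ r σ := Finset.inf'_le r (by simp [hP, hpos])
          have hNr : (0:ℝ) < N ^ (r σ) := Real.rpow_pos_of_pos hNpos _
          have hexp : Real.exp (-(r σ * t)) = (N ^ (r σ))⁻¹ * Real.exp (-(r σ * s)) := by
            rw [htdef, mul_add, neg_add, Real.exp_add, Real.rpow_def_of_pos hNpos,
              mul_comm (Real.log N) (r σ), ← Real.exp_neg]
          have hmono : Real.exp (-(r σ * s)) ≤ Real.exp (-(ρ * s)) :=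
            Real.exp_le_exp.mpr (by nlinarith)
          calc Real.exp (-(r σ * t)) * c * ‖σ (q:K)‖
              ≤ Real.exp (-(r σ * t)) * c * N ^ (r σ) :=
                mul_le_mul_of_nonneg_left hB (by positivity)
            _ = c * Real.exp (-(r σ * s)) := by
                rw [hexp]
                have ha : N ^ (r σ) ≠ 0 := hNr.ne'
                field_simp
            _ ≤ c * Real.exp (-(ρ * s)) := mul_le_mul_of_nonneg_left hmono hc.le
            _ ≤ δ / 2 := hcs
            _ < δ := by linarith
    exact absurd hcontr (not_le.mpr hub)
end
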